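/- Let a ∈ (0,1), c₁ > 2 with c₁/2 > √a + √(1-a). Then c₁ - 2√a > 2√(1-a), and the zero set of w₁(t,x) = max{J₁(t,x),0} (with J₁ as in the explicit piecewise formula) on {t > 0} equals {(t,x) : t > 0, x ≤ 2√(1-a)·t}. -/

import Mathlib

/-!
For `t > 0` the quadratic branch `x² / 4t - (1 - a) t` of `J₁` vanishes at `x = 2√(1-a) t`, which
lies inside its range `[0, (c₁ - 2√a) t)`. Beyond it, with `b = c₁/2 - √a > √(1-a)`, the linear
branch starts at `x = 2bt`, past its zero `c̄ t = (b + (1-a)/b) t`, and the outer branch is positive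
because `c₁ > 2`; to the left `J₁` is `-(1 - a) t ≤ 0`.
-/

noncomputable def J₁ (a c₁ : ℝ) (t x : ℝ) : ℝ :=
  if c₁ * t ≤ x then t / 4 * (x ^ 2 / t ^ 2 - 4)
  else if (c₁ - 2 * Real.sqrt a) * t ≤ x then
    (c₁ / 2 - Real.sqrt a) *
      (x - (c₁ / 2 - Real.sqrt a + (1 - a) / (c₁ / 2 - Real.sqrt a)) * t)
  else if 0 ≤ x then t / 4 * (x ^ 2 / t ^ 2 - 4 * (1 - a))
  else -t * (1 - a)

noncomputable def w₁ (a c₁ : ℝ) (t x : ℝ) : ℝ := max (J₁ a c₁ t x) 0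

open Real

theorem quarter_mul_sq_div_sq_sub_pos_iff {t : ℝ} (ht : 0 < t) (x c : ℝ) :
    0 < t / 4 * (x ^ 2 / t ^ 2 - c) ↔ c * t ^ 2 < x ^ 2 := by
  rw [mul_pos_iff_of_pos_left (by positivity), sub_pos, lt_div_iff₀ (by positivity)]

section

variable {a c₁ t x : ℝ}

theorem J₁_pos_of_lt (ha1 : a ≤ 1) (hc : 2 < c₁) (hc2 : √a + √(1 - a) < c₁ / 2)
    (ht : 0 < t) (hx : 2 * √(1 - a) * t < x) : 0 < J₁ a c₁ t x := by
  have hr : √(1 - a) ^ 2 = 1 - a := sq_sqrt (by linarith)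
  have hr0 : 0 ≤ 2 * √(1 - a) * t := by positivity
  unfold J₁
  split_ifs with h_outer h_linear h_quad
  · have h2t : 2 * t < x := (mul_lt_mul_of_pos_right hc ht).trans_le h_outer
    rw [quarter_mul_sq_div_sq_sub_pos_iff ht]
    nlinarith
  · have hb : √(1 - a) < c₁ / 2 - √a := by linarith
    have hslope : (1 - a) / (c₁ / 2 - √a) < c₁ / 2 - √a := by
      rw [div_lt_iff₀ (by linarith [sqrt_nonneg (1 - a)]), ← hr]
      nlinarith [sqrt_nonneg (1 - a)]
    apply mul_pos (by linarith [sqrt_nonneg (1 - a)])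
    nlinarith
  · rw [quarter_mul_sq_div_sq_sub_pos_iff ht]
    nlinarith
  · linarith

theorem J₁_nonpos_of_le (ha1 : a ≤ 1) (hc2 : √a + √(1 - a) < c₁ / 2)
    (ht : 0 < t) (hx : x ≤ 2 * √(1 - a) * t) : J₁ a c₁ t x ≤ 0 := by
  have hr : √(1 - a) ^ 2 = 1 - a := sq_sqrt (by linarith)
  have hb : 2 * √(1 - a) * t < (c₁ - 2 * √a) * t := by
    gcongr
    linarith
  unfold J₁
  split_ifs with h_outer h_linear h_quad
  · nlinarith [sqrt_nonneg a]
  · linarith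
  · rw [← not_lt, quarter_mul_sq_div_sq_sub_pos_iff ht]
    nlinarith
  · nlinarith

theorem J₁_nonpos_iff (ha1 : a ≤ 1) (hc : 2 < c₁) (hc2 : √a + √(1 - a) < c₁ / 2)
    (ht : 0 < t) : J₁ a c₁ t x ≤ 0 ↔ x ≤ 2 * √(1 - a) * t :=
  ⟨fun hJ => le_of_not_gt fun hx => (J₁_pos_of_lt ha1 hc hc2 ht hx).not_ge hJ,
    J₁_nonpos_of_le ha1 hc2 ht⟩

end

theorem stmt_12_general (a c₁ : ℝ) (ha1 : a < 1) (hc : 2 < c₁)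
    (hc2 : Real.sqrt a + Real.sqrt (1 - a) < c₁ / 2) :
    2 * Real.sqrt (1 - a) < c₁ - 2 * Real.sqrt a ∧
    {p : ℝ × ℝ | 0 < p.1 ∧ w₁ a c₁ p.1 p.2 = 0}
      = {p : ℝ × ℝ | 0 < p.1 ∧ p.2 ≤ 2 * Real.sqrt (1 - a) * p.1} := by
  refine ⟨by linarith, ?_⟩
  ext ⟨t, x⟩
  simp only [Set.mem_ofPred_eq, w₁, max_eq_right_iff]
  exact and_congr_right fun ht => J₁_nonpos_iff ha1.le hc hc2 ht

theorem stmt_12 (a c₁ : ℝ) (ha : 0 < a) (ha1 : a < 1) (hc : 2 < c₁)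
    (hc2 : Real.sqrt a + Real.sqrt (1 - a) < c₁ / 2) :
    2 * Real.sqrt (1 - a) < c₁ - 2 * Real.sqrt a ∧
    {p : ℝ × ℝ | 0 < p.1 ∧ w₁ a c₁ p.1 p.2 = 0}
      = {p : ℝ × ℝ | 0 < p.1 ∧ p.2 ≤ 2 * Real.sqrt (1 - a) * p.1} :=
  stmt_12_general a c₁ ha1 hc hc2
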